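/- arXiv:2403.08349 — 5 statements merged into one kernel-verified Lean document; each statement's English description precedes it below -/
import Mathlib

section
/- Let R be an integral domain whose group of units is exactly {1, −1}. Let t ∈ R with t ∉ {0, 1, −1}, let λ ∈ R∖{0}, and set A = λ·[[1, t], [t², t³]]. Then for every B ∈ S_tc(R) with B ≠ A, one has AB ≠ 0 and BA ≠ 0; that is, A is an isolated vertex of the subgraph of the undirected zero-divisor graph of M₂(R) induced on S_tc(R). -/
/-- The set `S_tc(R) ⊆ M₂(R)` from the paper:
`{λ·[[1, t],[t², t³]] : λ ∈ R∖{0}, t ∈ R} ∪ {[[0,0],[0,λ]] : λ ∈ R∖{0}}`. -/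
def Stc (R : Type*) [CommRing R] : Set (Matrix (Fin 2) (Fin 2) R) :=
  {A | (∃ l : R, l ≠ 0 ∧ ∃ t : R, A = l • !![1, t; t ^ 2, t ^ 3]) ∨
       (∃ l : R, l ≠ 0 ∧ A = !![0, 0; 0, l])}

/-- Let `R` be an integral domain whose units are exactly `{1, -1}`. Let
`t ∉ {0, 1, -1}`, `λ ≠ 0`, and `A = λ·[[1, t],[t², t³]]`. Then for every `B ∈ S_tc(R)` with
`B ≠ A` one has `A * B ≠ 0` and `B * A ≠ 0`; i.e. `A` is an isolated vertex of the subgraph of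
the undirected zero-divisor graph of `M₂(R)` induced on `S_tc(R)`. -/
theorem stmt8 (R : Type*) [CommRing R] [IsDomain R]
    (hu : ∀ u : Rˣ, (u : R) = 1 ∨ (u : R) = -1)
    (t : R) (ht0 : t ≠ 0) (ht1 : t ≠ 1) (htm1 : t ≠ -1) (l : R) (hl : l ≠ 0) :
    ∀ B ∈ Stc R, B ≠ l • !![1, t; t ^ 2, t ^ 3] →
      (l • !![1, t; t ^ 2, t ^ 3]) * B ≠ 0 ∧ B * (l • !![1, t; t ^ 2, t ^ 3]) ≠ 0 := by
  have htu : ∀ x : R, t * x ≠ -1 := by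
    intro x hx
    have : IsUnit t := IsUnit.of_mul_eq_one (a := t) (-x) (by linear_combination -hx)
    obtain ⟨u, rfl⟩ := this
    rcases hu u with h | h <;> simp_all
  intro B hB hne
  rcases hB with ⟨m, hm, s, rfl⟩ | ⟨m, hm, rfl⟩
  · constructor
    · intro h
      have h00 := congrFun (congrFun h 0) 0
      simp [Matrix.mul_apply, Fin.sum_univ_two] at h00
      have : l * m * (1 + t * s ^ 2) = 0 := by ring_nf; linear_combination h00
      rcases mul_eq_zero.1 this with h1 | h1
      · exact (mul_ne_zero hl hm) h1
      · exact htu (s ^ 2) (by linear_combination h1)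
    · intro h
      have h00 := congrFun (congrFun h 0) 0
      simp [Matrix.mul_apply, Fin.sum_univ_two] at h00
      have : m * l * (1 + s * t ^ 2) = 0 := by ring_nf; linear_combination h00
      rcases mul_eq_zero.1 this with h1 | h1
      · exact (mul_ne_zero hm hl) h1
      · have : t * (s * t) = -1 := by linear_combination h1
        exact htu (s * t) this
  · constructor
    · intro h
      have h01 := congrFun (congrFun h 0) 1
      simp [Matrix.mul_apply, Fin.sum_univ_two] at h01
      tauto
    · intro h
      have h10 := congrFun (congrFun h 1) 0
      simp [Matrix.mul_apply, Fin.sum_univ_two] at h10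
      tauto
end

section
/- Let R be an integral domain of characteristic zero and let n ≥ 1 be an integer. Then neither Γ_{1,n} nor Γ^un_{2,n} contains an induced path on four vertices: in each of these graphs there do not exist four distinct vertices a, b, c, d such that a is adjacent to b, b is adjacent to c, c is adjacent to d, while a is not adjacent to c, a is not adjacent to d, and b is not adjacent to d. Equivalently, Γ_{1,n} and Γ^un_{2,n} are cographs. -/
set_option linter.unusedSectionVars false
set_option linter.unreachableTactic false
set_option linter.unusedTactic false
set_option maxHeartbeats 1000000

section helpers
variable {R : Type*} [CommRing R] [IsDomain R] [CharZero R]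

lemma pq_mul (l m : R) : (!![l,0;0,0] : Matrix (Fin 2) (Fin 2) R) * !![0,0;0,m] = 0 := by
  ext i j; fin_cases i <;> fin_cases j <;> simp [Matrix.mul_apply, Fin.sum_univ_two]

lemma qp_mul (l m : R) : (!![0,0;0,l] : Matrix (Fin 2) (Fin 2) R) * !![m,0;0,0] = 0 := by
  ext i j; fin_cases i <;> fin_cases j <;> simp [Matrix.mul_apply, Fin.sum_univ_two]

lemma pp_mul_ne {l m : R} (hl : l ≠ 0) (hm : m ≠ 0) :
    (!![l,0;0,0] : Matrix (Fin 2) (Fin 2) R) * !![m,0;0,0] ≠ 0 := by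
  intro h
  have h0 := congrFun (congrFun h 0) 0
  simp [Matrix.mul_apply, Fin.sum_univ_two, hl, hm] at h0

lemma qq_mul_ne {l m : R} (hl : l ≠ 0) (hm : m ≠ 0) :
    (!![0,0;0,l] : Matrix (Fin 2) (Fin 2) R) * !![0,0;0,m] ≠ 0 := by
  intro h
  have h0 := congrFun (congrFun h 1) 1
  simp [Matrix.mul_apply, Fin.sum_univ_two, hl, hm] at h0

lemma mm_mul (x y : R) :
    (x • !![1,-1;1,-1] : Matrix (Fin 2) (Fin 2) R) * (y • !![1,-1;1,-1]) = 0 := by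
  ext i j; fin_cases i <;> fin_cases j <;>
    simp [Matrix.mul_apply, Fin.sum_univ_two] <;> ring

lemma mp_mul (x y : R) :
    (x • !![1,-1;1,-1] : Matrix (Fin 2) (Fin 2) R) * (y • !![1,1;1,1]) = 0 := by
  ext i j; fin_cases i <;> fin_cases j <;>
    simp [Matrix.mul_apply, Fin.sum_univ_two] <;> ring

lemma pm_mul_ne {x y : R} (hx : x ≠ 0) (hy : y ≠ 0) :
    (x • !![1,1;1,1] : Matrix (Fin 2) (Fin 2) R) * (y • !![1,-1;1,-1]) ≠ 0 := by
  intro h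
  have h0 := congrFun (congrFun h 0) 0
  simp [Matrix.mul_apply, Fin.sum_univ_two] at h0
  rcases h0 with h | h
  · exact hx h
  · exact hy h

lemma pp2_mul_ne {x y : R} (hx : x ≠ 0) (hy : y ≠ 0) :
    (x • !![1,1;1,1] : Matrix (Fin 2) (Fin 2) R) * (y • !![1,1;1,1]) ≠ 0 := by
  intro h
  have h0 := congrFun (congrFun h 0) 0
  simp [Matrix.mul_apply, Fin.sum_univ_two] at h0
  rcases h0 with h | h
  · exact hx h
  · exact hy h

end helpers

/-- The subgraph of the undirected zero-divisor graph of a ring induced on a set `V` of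
elements: distinct `u, v` are adjacent iff `u * v = 0` or `v * u = 0`. -/
def zdInducedGraph {S : Type*} [Ring S] (V : Set S) : SimpleGraph V where
  Adj u v := u ≠ v ∧ ((u : S) * v = 0 ∨ (v : S) * u = 0)
  symm := ⟨fun _ _ ⟨h1, h2⟩ => ⟨h1.symm, h2.symm⟩⟩
  loopless := ⟨fun _ h => h.1 rfl⟩

/-- The vertex set of `Γ_{1,n}`:
`{diag(λ,0) : λ ∈ ℤ, 1 ≤ |λ| ≤ n} ∪ {diag(0,λ) : λ ∈ ℤ, 1 ≤ |λ| ≤ n}` inside `M₂(R)`. -/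
def V1n (R : Type*) [CommRing R] (n : ℕ) : Set (Matrix (Fin 2) (Fin 2) R) :=
  {A | ∃ l : ℤ, 1 ≤ |l| ∧ |l| ≤ (n : ℤ) ∧
    (A = !![(l : R), 0; 0, 0] ∨ A = !![0, 0; 0, (l : R)])}

/-- The vertex set of `Γ^un_{2,n}`: with `M₋ = [[1,-1],[1,-1]]` and `M₊ = [[1,1],[1,1]]`,
`{λM₋ : λ ∈ ℤ, 1 ≤ |λ| ≤ n} ∪ {λM₊ : λ ∈ ℤ, 1 ≤ |λ| ≤ n}` inside `M₂(R)`. -/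
def V2n (R : Type*) [CommRing R] (n : ℕ) : Set (Matrix (Fin 2) (Fin 2) R) :=
  {A | ∃ l : ℤ, 1 ≤ |l| ∧ |l| ≤ (n : ℤ) ∧
    (A = (l : R) • !![1, -1; 1, -1] ∨ A = (l : R) • !![1, 1; 1, 1])}

/-- The graph `Γ_{1,n}`, the subgraph of the undirected zero-divisor graph `Γ(M₂(R))` induced
on `V1n R n`. -/
def Gamma1 (R : Type*) [CommRing R] (n : ℕ) : SimpleGraph (V1n R n) :=
  zdInducedGraph (V1n R n)

/-- The graph `Γ^un_{2,n}`, the subgraph of the undirected zero-divisor graph `Γ(M₂(R))`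
induced on `V2n R n`. -/
def Gamma2un (R : Type*) [CommRing R] (n : ℕ) : SimpleGraph (V2n R n) :=
  zdInducedGraph (V2n R n)

/-- A graph contains an induced path on four vertices. -/
def HasInducedP4 {V : Type*} (G : SimpleGraph V) : Prop :=
  ∃ a b c d : V, a ≠ b ∧ a ≠ c ∧ a ≠ d ∧ b ≠ c ∧ b ≠ d ∧ c ≠ d ∧
    G.Adj a b ∧ G.Adj b c ∧ G.Adj c d ∧ ¬G.Adj a c ∧ ¬G.Adj a d ∧ ¬G.Adj b d

section mainlem
variable {R : Type*} [CommRing R] [IsDomain R] [CharZero R]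

lemma ty1 {n : ℕ} {A : Matrix (Fin 2) (Fin 2) R} (h : A ∈ V1n R n) :
    (∃ l : R, l ≠ 0 ∧ A = !![l,0;0,0]) ∨ (∃ l : R, l ≠ 0 ∧ A = !![0,0;0,l]) := by
  obtain ⟨l, hl1, _, h | h⟩ := h
  · exact Or.inl ⟨(l : R), Int.cast_ne_zero.2 (by rintro rfl; simp at hl1), h⟩
  · exact Or.inr ⟨(l : R), Int.cast_ne_zero.2 (by rintro rfl; simp at hl1), h⟩

lemma ty2 {n : ℕ} {A : Matrix (Fin 2) (Fin 2) R} (h : A ∈ V2n R n) :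
    (∃ l : R, l ≠ 0 ∧ A = l • !![1,-1;1,-1]) ∨ (∃ l : R, l ≠ 0 ∧ A = l • !![1,1;1,1]) := by
  obtain ⟨l, hl1, _, h | h⟩ := h
  · exact Or.inl ⟨(l : R), Int.cast_ne_zero.2 (by rintro rfl; simp at hl1), h⟩
  · exact Or.inr ⟨(l : R), Int.cast_ne_zero.2 (by rintro rfl; simp at hl1), h⟩

end mainlem

lemma zd_adj {S : Type*} [Ring S] {V : Set S} {u v : V} :
    (zdInducedGraph V).Adj u v ↔ u ≠ v ∧ ((u : S) * v = 0 ∨ (v : S) * u = 0) := Iff.rfl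

/-- Over an integral domain `R` of characteristic zero and for `n ≥ 1`,
neither `Γ_{1,n}` nor `Γ^un_{2,n}` contains an induced path on four vertices; equivalently,
both are cographs. -/
theorem stmt11 (R : Type*) [CommRing R] [IsDomain R] [CharZero R] (n : ℕ) (hn : 1 ≤ n) :
    ¬HasInducedP4 (Gamma1 R n) ∧ ¬HasInducedP4 (Gamma2un R n) := by
  constructor
  · rintro ⟨⟨a,pa⟩,⟨b,pb⟩,⟨c,pc⟩,⟨d,pd⟩, hab,hac,had,hbc,hbd,hcd, Aab,Abc,Acd,Nac,Nad,Nbd⟩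
    have Pab : a * b = 0 ∨ b * a = 0 := Aab.2
    have Pbc : b * c = 0 ∨ c * b = 0 := Abc.2
    have Pcd : c * d = 0 ∨ d * c = 0 := Acd.2
    have Qac : ¬(a * c = 0 ∨ c * a = 0) := fun h => Nac ⟨hac, h⟩
    have Qad : ¬(a * d = 0 ∨ d * a = 0) := fun h => Nad ⟨had, h⟩
    have Qbd : ¬(b * d = 0 ∨ d * b = 0) := fun h => Nbd ⟨hbd, h⟩
    clear Aab Abc Acd Nac Nad Nbd hab hac had hbc hbd hcd
    obtain ⟨la, hla, rfl⟩ | ⟨la, hla, rfl⟩ := ty1 pa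
    · obtain ⟨lb, hlb, rfl⟩ | ⟨lb, hlb, rfl⟩ := ty1 pb
      · exact Pab.elim (pp_mul_ne hla hlb) (pp_mul_ne hlb hla)
      · obtain ⟨lc, hlc, rfl⟩ | ⟨lc, hlc, rfl⟩ := ty1 pc
        · obtain ⟨ld, hld, rfl⟩ | ⟨ld, hld, rfl⟩ := ty1 pd
          · exact Pcd.elim (pp_mul_ne hlc hld) (pp_mul_ne hld hlc)
          · exact Qad (Or.inl (pq_mul _ _))
        · exact Pbc.elim (qq_mul_ne hlb hlc) (qq_mul_ne hlc hlb)
    · obtain ⟨lb, hlb, rfl⟩ | ⟨lb, hlb, rfl⟩ := ty1 pb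
      · obtain ⟨lc, hlc, rfl⟩ | ⟨lc, hlc, rfl⟩ := ty1 pc
        · exact Pbc.elim (pp_mul_ne hlb hlc) (pp_mul_ne hlc hlb)
        · obtain ⟨ld, hld, rfl⟩ | ⟨ld, hld, rfl⟩ := ty1 pd
          · exact Qad (Or.inl (qp_mul _ _))
          · exact Pcd.elim (qq_mul_ne hlc hld) (qq_mul_ne hld hlc)
      · exact Pab.elim (qq_mul_ne hla hlb) (qq_mul_ne hlb hla)
  · rintro ⟨⟨a,pa⟩,⟨b,pb⟩,⟨c,pc⟩,⟨d,pd⟩, hab,hac,had,hbc,hbd,hcd, Aab,Abc,Acd,Nac,Nad,Nbd⟩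
    have Pbc : b * c = 0 ∨ c * b = 0 := Abc.2
    have Qac : ¬(a * c = 0 ∨ c * a = 0) := fun h => Nac ⟨hac, h⟩
    have Qbd : ¬(b * d = 0 ∨ d * b = 0) := fun h => Nbd ⟨hbd, h⟩
    clear Aab Abc Acd Nac Nad Nbd hab hac had hbc hbd hcd
    obtain ⟨la, hla, rfl⟩ | ⟨la, hla, rfl⟩ := ty2 pa
    · obtain ⟨lc, hlc, rfl⟩ | ⟨lc, hlc, rfl⟩ := ty2 pc
      · exact Qac (Or.inl (mm_mul _ _))
      · exact Qac (Or.inl (mp_mul _ _))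
    · obtain ⟨lb, hlb, rfl⟩ | ⟨lb, hlb, rfl⟩ := ty2 pb
      · obtain ⟨ld, hld, rfl⟩ | ⟨ld, hld, rfl⟩ := ty2 pd
        · exact Qbd (Or.inl (mm_mul _ _))
        · exact Qbd (Or.inl (mp_mul _ _))
      · obtain ⟨lc, hlc, rfl⟩ | ⟨lc, hlc, rfl⟩ := ty2 pc
        · exact Qac (Or.inr (mp_mul _ _))
        · exact Pbc.elim (pp2_mul_ne hlb hlc) (pp2_mul_ne hlc hlb)
end

section
/- Let R be an integral domain of characteristic zero and let n ≥ 1 be an integer. Then the chromatic number of Γ_{1,n} equals 2, and the chromatic number of Γ^un_{2,n} equals 2n + 1. -/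
namespace Stmt12Aux

lemma adj_iff {S : Type*} [Ring S] (V : Set S) (u v : V) :
    (zdInducedGraph V).Adj u v ↔ u ≠ v ∧ ((u : S) * v = 0 ∨ (v : S) * u = 0) := Iff.rfl

/-- Encode a nonzero integer in `[-n,n]` into `[0, 2n)`. -/
def enc (n : ℕ) (l : ℤ) : ℕ := if l < 0 then (l + n).toNat else (l + n - 1).toNat

lemma enc_lt {n : ℕ} {l : ℤ} (h1 : 1 ≤ |l|) (h2 : |l| ≤ (n : ℤ)) : enc n l < 2 * n := by
  have h3 := abs_le.mp h2
  have h4 : l ≠ 0 := by rintro rfl; simp at h1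
  unfold enc; split_ifs <;> omega

lemma enc_inj {n : ℕ} {l m : ℤ} (h1 : 1 ≤ |l|) (h2 : |l| ≤ (n : ℤ)) (h3 : 1 ≤ |m|)
    (h4 : |m| ≤ (n : ℤ)) (h : enc n l = enc n m) : l = m := by
  have ha := abs_le.mp h2
  have hb := abs_le.mp h4
  have hl0 : l ≠ 0 := by rintro rfl; simp at h1
  have hm0 : m ≠ 0 := by rintro rfl; simp at h3
  unfold enc at h; split_ifs at h <;> omega

/-- Decode, the inverse of `enc`. -/
def dec (n : ℕ) (i : ℕ) : ℤ := if i < n then (i : ℤ) - n else (i : ℤ) - n + 1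

lemma dec_spec {n i : ℕ} (h : i < 2 * n) :
    dec n i ≠ 0 ∧ -(n : ℤ) ≤ dec n i ∧ dec n i ≤ (n : ℤ) := by
  unfold dec; split_ifs <;> omega

lemma dec_abs {n i : ℕ} (h : i < 2 * n) : 1 ≤ |dec n i| ∧ |dec n i| ≤ (n : ℤ) := by
  obtain ⟨h0, h1, h2⟩ := dec_spec h
  exact ⟨Int.one_le_abs (by omega), abs_le.mpr ⟨h1, h2⟩⟩

lemma dec_inj {n i j : ℕ} (hi : i < 2 * n) (hj : j < 2 * n) (h : dec n i = dec n j) : i = j := by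
  unfold dec at h; split_ifs at h <;> omega

section Matrices

variable {R : Type*} [CommRing R]

lemma entry_eq {A B : Matrix (Fin 2) (Fin 2) R} (h : A = B) (i j : Fin 2) : A i j = B i j := by
  rw [h]

lemma MmMm : (!![1,-1;1,-1] : Matrix (Fin 2) (Fin 2) R) * !![1,-1;1,-1] = 0 := by
  ext i j; fin_cases i <;> fin_cases j <;> simp [Matrix.mul_apply, Fin.sum_univ_two]

lemma MmMp : (!![1,-1;1,-1] : Matrix (Fin 2) (Fin 2) R) * !![1,1;1,1] = 0 := by
  ext i j; fin_cases i <;> fin_cases j <;> simp [Matrix.mul_apply, Fin.sum_univ_two]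

lemma smulMm_mul_smulMm (a b : R) :
    (a • !![1,-1;1,-1] : Matrix (Fin 2) (Fin 2) R) * (b • !![1,-1;1,-1]) = 0 := by
  rw [Matrix.smul_mul, Matrix.mul_smul, MmMm]; simp

lemma smulMm_mul_smulMp (a b : R) :
    (a • !![1,-1;1,-1] : Matrix (Fin 2) (Fin 2) R) * (b • !![1,1;1,1]) = 0 := by
  rw [Matrix.smul_mul, Matrix.mul_smul, MmMp]; simp

lemma smulMp_mul_entry (a b : R) :
    ((a • !![1,1;1,1] * b • !![1,1;1,1] : Matrix (Fin 2) (Fin 2) R)) 0 0 = a * b * 2 := by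
  simp [Matrix.mul_apply, Fin.sum_univ_two]; ring

lemma d1_mul_d2 (a b : R) : (!![a,0;0,0] : Matrix (Fin 2) (Fin 2) R) * !![0,0;0,b] = 0 := by
  ext i j; fin_cases i <;> fin_cases j <;> simp [Matrix.mul_apply, Fin.sum_univ_two]

lemma d2_mul_d1 (a b : R) : (!![0,0;0,a] : Matrix (Fin 2) (Fin 2) R) * !![b,0;0,0] = 0 := by
  ext i j; fin_cases i <;> fin_cases j <;> simp [Matrix.mul_apply, Fin.sum_univ_two]

lemma d1_mul_d1_entry (a b : R) :
    ((!![a,0;0,0] : Matrix (Fin 2) (Fin 2) R) * !![b,0;0,0]) 0 0 = a * b := by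
  simp [Matrix.mul_apply, Fin.sum_univ_two]

lemma d2_mul_d2_entry (a b : R) :
    ((!![0,0;0,a] : Matrix (Fin 2) (Fin 2) R) * !![0,0;0,b]) 1 1 = a * b := by
  simp [Matrix.mul_apply, Fin.sum_univ_two]

variable [CharZero R]

/-- If `l•M₋ = m•M₊` with integer scalars, then both scalars are zero. -/
lemma smul_ne (l m : ℤ) (hl : l ≠ 0)
    (h : ((l : R) • !![1,-1;1,-1] : Matrix (Fin 2) (Fin 2) R) = (m : R) • !![1,1;1,1]) :
    False := by
  have e1 := entry_eq h 0 0
  have e2 := entry_eq h 0 1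
  simp at e1 e2
  subst e1
  have : ((2 * l : ℤ) : R) = 0 := by push_cast; linear_combination -e2
  have h2 : (2 * l : ℤ) = 0 := by exact_mod_cast this
  omega

lemma smulMm_inj {l m : ℤ}
    (h : ((l : R) • !![1,-1;1,-1] : Matrix (Fin 2) (Fin 2) R) = (m : R) • !![1,-1;1,-1]) :
    l = m := by
  have e1 := entry_eq h 0 0
  simp at e1
  exact_mod_cast e1

end Matrices

end Stmt12Aux

open Stmt12Aux in
/-- Over an integral domain `R` of characteristic zero and for `n ≥ 1`, the
chromatic number of `Γ_{1,n}` equals `2`, and the chromatic number of `Γ^un_{2,n}` equals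
`2n + 1`. -/
theorem stmt12 (R : Type*) [CommRing R] [IsDomain R] [CharZero R] (n : ℕ) (hn : 1 ≤ n) :
    (Gamma1 R n).chromaticNumber = 2 ∧
    (Gamma2un R n).chromaticNumber = ((2 * n + 1 : ℕ) : ℕ∞) := by
  classical
  have hn' : (1 : ℤ) ≤ (n : ℤ) := by exact_mod_cast hn
  constructor
  · -- Γ_{1,n}
    -- upper bound: 2-coloring
    have hcol : (Gamma1 R n).Colorable 2 := by
      refine ⟨SimpleGraph.Coloring.mk
        (fun v => if (v : Matrix (Fin 2) (Fin 2) R) 0 0 = 0 then 0 else 1) ?_⟩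
      intro u v hadj
      rw [Gamma1, adj_iff] at hadj
      obtain ⟨hne, hmul⟩ := hadj
      obtain ⟨l, hl1, _, hA⟩ := u.2
      obtain ⟨m, hm1, _, hB⟩ := v.2
      have hl0 : l ≠ 0 := by rintro rfl; simp at hl1
      have hm0 : m ≠ 0 := by rintro rfl; simp at hm1
      have hl0' : (l : R) ≠ 0 := Int.cast_ne_zero.mpr hl0
      have hm0' : (m : R) ≠ 0 := Int.cast_ne_zero.mpr hm0
      rcases hA with hA | hA <;> rcases hB with hB | hB
      · exfalso
        rw [hA, hB] at hmul
        rcases hmul with h | h <;>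
        · have := entry_eq h 0 0
          rw [d1_mul_d1_entry] at this
          simp at this
          omega
      · simp [hA, hB, hl0']
      · simp [hA, hB, hm0']
      · exfalso
        rw [hA, hB] at hmul
        rcases hmul with h | h <;>
        · have := entry_eq h 1 1
          rw [d2_mul_d2_entry] at this
          simp at this
          omega
    -- lower bound: not 1-colorable
    have hnot : ¬ (Gamma1 R n).Colorable 1 := by
      rintro ⟨C⟩
      set u : V1n R n := ⟨!![((1:ℤ) : R), 0; 0, 0], ⟨1, by norm_num, by simpa using hn', Or.inl rfl⟩⟩
      set v : V1n R n := ⟨!![0, 0; 0, ((1:ℤ) : R)], ⟨1, by norm_num, by simpa using hn', Or.inr rfl⟩⟩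
      have hne : u ≠ v := by
        intro h
        have := entry_eq (congrArg Subtype.val h) 0 0
        simp [u, v] at this
      have hadj : (Gamma1 R n).Adj u v := by
        rw [Gamma1, adj_iff]
        exact ⟨hne, Or.inl (d1_mul_d2 _ _)⟩
      exact C.valid hadj (Subsingleton.elim _ _)
    have hle : (Gamma1 R n).chromaticNumber ≤ 2 := by
      have := SimpleGraph.chromaticNumber_le_iff_colorable.mpr hcol
      exact_mod_cast this
    have hge : 2 ≤ (Gamma1 R n).chromaticNumber := by
      have h1 : ¬ (Gamma1 R n).chromaticNumber ≤ (1 : ℕ) :=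
        fun h => hnot (SimpleGraph.chromaticNumber_le_iff_colorable.mp h)
      have h2 : ((1:ℕ) : ℕ∞) < (Gamma1 R n).chromaticNumber := not_le.mp h1
      have := Order.add_one_le_of_lt h2
      exact le_trans (le_of_eq (by norm_num)) this
    exact le_antisymm hle hge
  · -- Γ^un_{2,n}
    -- upper bound: (2n+1)-coloring
    have hcol : (Gamma2un R n).Colorable (2 * n + 1) := by
      refine ⟨SimpleGraph.Coloring.mk
        (fun v =>
          if h : ∃ l : ℤ, 1 ≤ |l| ∧ |l| ≤ (n : ℤ) ∧
              (v : Matrix (Fin 2) (Fin 2) R) = (l : R) • !![1,-1;1,-1]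
          then ⟨enc n h.choose, (enc_lt h.choose_spec.1 h.choose_spec.2.1).trans (Nat.lt_succ_self _)⟩
          else ⟨2 * n, Nat.lt_succ_self _⟩) ?_⟩
      intro u v hadj
      rw [Gamma2un, adj_iff] at hadj
      obtain ⟨hne, hmul⟩ := hadj
      obtain ⟨l, hl1, hl2, hA⟩ := u.2
      obtain ⟨m, hm1, hm2, hB⟩ := v.2
      have hl0 : l ≠ 0 := by rintro rfl; simp at hl1
      have hm0 : m ≠ 0 := by rintro rfl; simp at hm1
      rcases hA with hA | hA <;> rcases hB with hB | hB
      · -- both M₋ type: encode injectively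
        have hu : ∃ l' : ℤ, 1 ≤ |l'| ∧ |l'| ≤ (n : ℤ) ∧
            (u : Matrix (Fin 2) (Fin 2) R) = (l' : R) • !![1,-1;1,-1] := ⟨l, hl1, hl2, hA⟩
        have hv : ∃ l' : ℤ, 1 ≤ |l'| ∧ |l'| ≤ (n : ℤ) ∧
            (v : Matrix (Fin 2) (Fin 2) R) = (l' : R) • !![1,-1;1,-1] := ⟨m, hm1, hm2, hB⟩
        simp only [dif_pos hu, dif_pos hv]
        intro heq
        have hval : enc n hu.choose = enc n hv.choose := by
          exact congrArg Fin.val heq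
        have h1 : hu.choose = l := smulMm_inj (hu.choose_spec.2.2.symm.trans hA)
        have h2 : hv.choose = m := smulMm_inj (hv.choose_spec.2.2.symm.trans hB)
        rw [h1, h2] at hval
        have : l = m := enc_inj hl1 hl2 hm1 hm2 hval
        exact hne (Subtype.ext (hA.trans (by rw [this, ← hB])))
      · -- u is M₋, v is M₊
        have hu : ∃ l' : ℤ, 1 ≤ |l'| ∧ |l'| ≤ (n : ℤ) ∧
            (u : Matrix (Fin 2) (Fin 2) R) = (l' : R) • !![1,-1;1,-1] := ⟨l, hl1, hl2, hA⟩
        have hv : ¬ ∃ l' : ℤ, 1 ≤ |l'| ∧ |l'| ≤ (n : ℤ) ∧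
            (v : Matrix (Fin 2) (Fin 2) R) = (l' : R) • !![1,-1;1,-1] := by
          rintro ⟨l', hl'1, _, hv'⟩
          exact smul_ne l' m (by rintro rfl; simp at hl'1) (hv'.symm.trans hB)
        simp only [dif_pos hu, dif_neg hv]
        intro heq
        have hval := congrArg Fin.val heq
        simp only at hval
        have := enc_lt hu.choose_spec.1 hu.choose_spec.2.1
        omega
      · -- u is M₊, v is M₋
        have hv : ∃ l' : ℤ, 1 ≤ |l'| ∧ |l'| ≤ (n : ℤ) ∧
            (v : Matrix (Fin 2) (Fin 2) R) = (l' : R) • !![1,-1;1,-1] := ⟨m, hm1, hm2, hB⟩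
        have hu : ¬ ∃ l' : ℤ, 1 ≤ |l'| ∧ |l'| ≤ (n : ℤ) ∧
            (u : Matrix (Fin 2) (Fin 2) R) = (l' : R) • !![1,-1;1,-1] := by
          rintro ⟨l', hl'1, _, hu'⟩
          exact smul_ne l' l (by rintro rfl; simp at hl'1) (hu'.symm.trans hA)
        simp only [dif_pos hv, dif_neg hu]
        intro heq
        have hval := congrArg Fin.val heq
        simp only at hval
        have := enc_lt hv.choose_spec.1 hv.choose_spec.2.1
        omega
      · -- both M₊: no edge possible
        exfalso
        rw [hA, hB] at hmul
        rcases hmul with h | h <;>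
        · have := entry_eq h 0 0
          rw [smulMp_mul_entry] at this
          simp at this
          omega
    -- lower bound: not (2n)-colorable
    have hnot : ¬ (Gamma2un R n).Colorable (2 * n) := by
      rintro ⟨C⟩
      set g : Fin (2 * n + 1) → V2n R n := fun i =>
        if h : (i : ℕ) < 2 * n
        then ⟨(dec n i : R) • !![1,-1;1,-1],
          ⟨dec n i, (dec_abs h).1, (dec_abs h).2, Or.inl rfl⟩⟩
        else ⟨((1:ℤ) : R) • !![1,1;1,1], ⟨1, by norm_num, by simpa using hn', Or.inr rfl⟩⟩
        with hg
      have hinj : Function.Injective (C ∘ g) := by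
        intro i j hij
        by_contra hne'
        -- show g i ≠ g j and Adj (g i) (g j), contradicting valid coloring
        have hne : g i ≠ g j := by
          intro h
          have hval := congrArg Subtype.val h
          by_cases hi : (i : ℕ) < 2 * n <;> by_cases hj : (j : ℕ) < 2 * n
          · rw [hg] at hval
            simp only [dif_pos hi, dif_pos hj] at hval
            exact hne' (Fin.ext (dec_inj hi hj (smulMm_inj hval)))
          · rw [hg] at hval
            simp only [dif_pos hi, dif_neg hj] at hval
            exact smul_ne _ _ (dec_spec hi).1 hval
          · rw [hg] at hval
            simp only [dif_neg hi, dif_pos hj] at hval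
            exact smul_ne _ _ (dec_spec hj).1 hval.symm
          · exact hne' (Fin.ext (by omega))
        have hadj : (Gamma2un R n).Adj (g i) (g j) := by
          rw [Gamma2un, adj_iff]
          refine ⟨hne, ?_⟩
          by_cases hi : (i : ℕ) < 2 * n
          · left
            rw [hg]
            simp only [dif_pos hi]
            by_cases hj : (j : ℕ) < 2 * n
            · simp only [dif_pos hj]; exact smulMm_mul_smulMm _ _
            · simp only [dif_neg hj]; exact smulMm_mul_smulMp _ _
          · by_cases hj : (j : ℕ) < 2 * n
            · right
              rw [hg]
              simp only [dif_pos hj, dif_neg hi]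
              exact smulMm_mul_smulMp _ _
            · exact absurd (Fin.ext (by omega : (i : ℕ) = (j : ℕ))) hne'
        exact C.valid hadj hij
      have := Fintype.card_le_of_injective _ hinj
      simp only [Fintype.card_fin] at this
      omega
    have hle : (Gamma2un R n).chromaticNumber ≤ ((2 * n + 1 : ℕ) : ℕ∞) :=
      SimpleGraph.chromaticNumber_le_iff_colorable.mpr hcol
    have hge : ((2 * n + 1 : ℕ) : ℕ∞) ≤ (Gamma2un R n).chromaticNumber := by
      have h1 : ¬ (Gamma2un R n).chromaticNumber ≤ ((2 * n : ℕ) : ℕ∞) :=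
        fun h => hnot (SimpleGraph.chromaticNumber_le_iff_colorable.mp h)
      have h2 : ((2 * n : ℕ) : ℕ∞) < (Gamma2un R n).chromaticNumber := not_le.mp h1
      calc ((2 * n + 1 : ℕ) : ℕ∞) = ((2 * n : ℕ) : ℕ∞) + 1 := by push_cast; ring
        _ ≤ _ := Order.add_one_le_of_lt h2
    exact le_antisymm hle hge
end

section
/- Let R be an integral domain of characteristic zero. For every integer n ≥ 1 there exists an injective group homomorphism from the symmetric group S_{2n} into the automorphism group of the undirected zero-divisor graph Γ(M₂(R)) (the group of graph isomorphisms from Γ(M₂(R)) to itself under composition). -/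
/-- The vertex set of the undirected zero-divisor graph of `M₂(R)`: nonzero matrices
annihilated on some side by a nonzero matrix. -/
def zdVertexSet (R : Type*) [CommRing R] : Set (Matrix (Fin 2) (Fin 2) R) :=
  {A | A ≠ 0 ∧ ∃ B : Matrix (Fin 2) (Fin 2) R, B ≠ 0 ∧ (A * B = 0 ∨ B * A = 0)}

/-- The undirected zero-divisor graph `Γ(M₂(R))`: distinct vertices `u, v` are adjacent iff
`u * v = 0` or `v * u = 0`. -/
def zdGraph (R : Type*) [CommRing R] : SimpleGraph (zdVertexSet R) where
  Adj u v := u ≠ v ∧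
    ((u : Matrix (Fin 2) (Fin 2) R) * v = 0 ∨ (v : Matrix (Fin 2) (Fin 2) R) * u = 0)
  symm := ⟨fun _ _ ⟨h1, h2⟩ => ⟨h1.symm, h2.symm⟩⟩
  loopless := ⟨fun _ h => h.1 rfl⟩

section aux
variable {R : Type*} [CommRing R] [IsDomain R]

/-- test matrix -/
def EM (c : R) : Matrix (Fin 2) (Fin 2) R := !![c, 0; 0, 0]

lemma EM_ne_zero {c : R} (hc : c ≠ 0) : EM c ≠ 0 := fun h =>
  hc (by simpa [EM] using congrFun (congrFun h 0) 0)

lemma EM_mul_left {c : R} (hc : c ≠ 0) (v : Matrix (Fin 2) (Fin 2) R) :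
    EM c * v = 0 ↔ v 0 0 = 0 ∧ v 0 1 = 0 := by
  constructor
  · intro h
    have h0 := congrFun (congrFun h 0) 0
    have h1 := congrFun (congrFun h 0) 1
    simp [EM, Matrix.mul_apply, Fin.sum_univ_two] at h0 h1
    exact ⟨h0.resolve_left hc, h1.resolve_left hc⟩
  · rintro ⟨h0, h1⟩
    ext i j
    fin_cases i <;> fin_cases j <;>
      simp [EM, Matrix.mul_apply, Fin.sum_univ_two, h0, h1]

lemma EM_mul_right {c : R} (hc : c ≠ 0) (v : Matrix (Fin 2) (Fin 2) R) :
    v * EM c = 0 ↔ v 0 0 = 0 ∧ v 1 0 = 0 := by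
  constructor
  · intro h
    have h0 := congrFun (congrFun h 0) 0
    have h1 := congrFun (congrFun h 1) 0
    simp [EM, Matrix.mul_apply, Fin.sum_univ_two] at h0 h1
    exact ⟨h0.resolve_right hc, h1.resolve_right hc⟩
  · rintro ⟨h0, h1⟩
    ext i j
    fin_cases i <;> fin_cases j <;>
      simp [EM, Matrix.mul_apply, Fin.sum_univ_two, h0, h1]

lemma EM_mul_EM_ne {c d : R} (hc : c ≠ 0) (hd : d ≠ 0) : EM c * EM d ≠ 0 := by
  intro h
  have h0 := congrFun (congrFun h 0) 0
  simp [EM, Matrix.mul_apply, Fin.sum_univ_two] at h0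
  exact h0.elim hc hd

lemma EM_mem {c : R} (hc : c ≠ 0) : EM c ∈ zdVertexSet R := by
  refine ⟨EM_ne_zero hc, !![0,0;0,1], ?_, Or.inl ?_⟩
  · intro h
    simpa using congrFun (congrFun h 1) 1
  · ext i j
    fin_cases i <;> fin_cases j <;> simp [EM, Matrix.mul_apply, Fin.sum_univ_two]

end aux

/-- Over an integral domain `R` of characteristic zero, for every `n ≥ 1`
the symmetric group `S_{2n}` embeds into the automorphism group of the undirected zero-divisor
graph `Γ(M₂(R))` (graph isomorphisms of `Γ(M₂(R))` to itself under composition). -/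
theorem stmt18 (R : Type*) [CommRing R] [IsDomain R] [CharZero R] (n : ℕ) (hn : 1 ≤ n) :
    ∃ φ : Equiv.Perm (Fin (2 * n)) →* (zdGraph R ≃g zdGraph R), Function.Injective φ := by
  classical
  -- the embedding of indices into vertices
  have hne : ∀ i : Fin (2 * n), ((i : ℕ) + 1 : R) ≠ 0 := fun i =>
    Nat.cast_add_one_ne_zero (i : ℕ)
  set f : Fin (2 * n) → zdVertexSet R :=
    fun i => ⟨EM ((i : ℕ) + 1 : R), EM_mem (hne i)⟩ with hf
  have finj : Function.Injective f := by
    intro i j h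
    have := congrFun (congrFun (congrArg Subtype.val h) 0) 0
    simp only [hf, EM, Matrix.of_apply, Matrix.cons_val', Matrix.cons_val_zero, Matrix.empty_val',
      Matrix.cons_val_fin_one] at this
    have : ((i : ℕ) : R) = ((j : ℕ) : R) := by
      have := add_right_cancel this
      exact_mod_cast this
    exact Fin.ext (Nat.cast_injective this)
  set ι : Fin (2 * n) ↪ zdVertexSet R := ⟨f, finj⟩ with hι
  set P : Equiv.Perm (Fin (2 * n)) →* Equiv.Perm (zdVertexSet R) :=
    Equiv.Perm.viaEmbeddingHom ι with hP
  have Papp : ∀ (σ : Equiv.Perm (Fin (2 * n))) (i : Fin (2 * n)), P σ (ι i) = ι (σ i) :=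
    fun σ i => Equiv.Perm.viaEmbedding_apply σ ι i
  have Pnot : ∀ (σ : Equiv.Perm (Fin (2 * n))) (v : zdVertexSet R),
      v ∉ Set.range ι → P σ v = v :=
    fun σ v hv => Equiv.Perm.viaEmbedding_apply_of_notMem σ ι v hv
  -- key: each P σ preserves adjacency (one direction suffices by symmetry)
  have key : ∀ (σ : Equiv.Perm (Fin (2 * n))) (u v : zdVertexSet R),
      (zdGraph R).Adj u v → (zdGraph R).Adj (P σ u) (P σ v) := by
    intro σ u v huv
    obtain ⟨hneq, hprod⟩ : u ≠ v ∧ _ := huv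
    by_cases hu : u ∈ Set.range ι <;> by_cases hv : v ∈ Set.range ι
    · -- both in range: impossible adjacency
      obtain ⟨i, rfl⟩ := hu; obtain ⟨j, rfl⟩ := hv
      exfalso
      rcases hprod with h | h
      · exact EM_mul_EM_ne (hne i) (hne j) h
      · exact EM_mul_EM_ne (hne j) (hne i) h
    · obtain ⟨i, rfl⟩ := hu
      rw [Papp σ i, Pnot σ v hv]
      refine ⟨fun h => hv ⟨σ i, h⟩, ?_⟩
      rcases hprod with h | h
      · exact Or.inl ((EM_mul_left (hne (σ i)) _).2 ((EM_mul_left (hne i) _).1 h))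
      · exact Or.inr ((EM_mul_right (hne (σ i)) _).2 ((EM_mul_right (hne i) _).1 h))
    · obtain ⟨j, rfl⟩ := hv
      rw [Papp σ j, Pnot σ u hu]
      refine ⟨fun h => hu ⟨σ j, h.symm⟩, ?_⟩
      rcases hprod with h | h
      · exact Or.inl ((EM_mul_right (hne (σ j)) _).2 ((EM_mul_right (hne j) _).1 h))
      · exact Or.inr ((EM_mul_left (hne (σ j)) _).2 ((EM_mul_left (hne j) _).1 h))
    · rw [Pnot σ u hu, Pnot σ v hv]
      exact ⟨hneq, hprod⟩
  have key' : ∀ (σ : Equiv.Perm (Fin (2 * n))) (u v : zdVertexSet R),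
      (zdGraph R).Adj (P σ u) (P σ v) ↔ (zdGraph R).Adj u v := by
    intro σ u v
    refine ⟨fun h => ?_, key σ u v⟩
    have := key σ⁻¹ _ _ h
    rwa [show P σ⁻¹ (P σ u) = u by
        rw [← Equiv.Perm.mul_apply, ← map_mul, inv_mul_cancel, map_one, Equiv.Perm.one_apply],
      show P σ⁻¹ (P σ v) = v by
        rw [← Equiv.Perm.mul_apply, ← map_mul, inv_mul_cancel, map_one, Equiv.Perm.one_apply]]
      at this
  refine ⟨{ toFun := fun σ => ⟨P σ, key' σ _ _⟩,
            map_one' := ?_, map_mul' := ?_ }, ?_⟩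
  · apply RelIso.ext; intro x
    show P 1 x = x
    rw [map_one, Equiv.Perm.one_apply]
  · intro σ τ
    apply RelIso.ext; intro x
    show P (σ * τ) x = P σ (P τ x)
    rw [map_mul, Equiv.Perm.mul_apply]
  · intro σ τ h
    exact Equiv.Perm.viaEmbeddingHom_injective ι
      (Equiv.ext fun x => congrArg (fun (g : zdGraph R ≃g zdGraph R) => g x) h)
end

section
/- Let R be an integral domain of characteristic zero and let G be the automorphism group of the undirected zero-divisor graph Γ(M₂(R)) (the group of graph isomorphisms from Γ(M₂(R)) to itself under composition). Then G is not a Jordan group: there is no positive integer d such that every finite subgroup H of G contains an abelian normal subgroup whose index in H is at most d. -/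
section aux

variable (R : Type*) [CommRing R] [IsDomain R] [CharZero R]

/-- The basic nilpotent matrix `E` with a single `1` in position `(0,1)`. -/
def zdE : Matrix (Fin 2) (Fin 2) R := Matrix.single 0 1 1

lemma zdE_mul_zdE : zdE R * zdE R = 0 := by
  unfold zdE
  apply Matrix.single_mul_single_of_ne
  decide

lemma zdE_ne_zero : zdE R ≠ 0 := by
  intro h
  have := congrFun (congrFun h 0) 1
  simp [zdE, Matrix.single_apply_same] at this

variable {R}

lemma zd_smul_eq_zero (n : ℕ) (M : Matrix (Fin 2) (Fin 2) R) :
    ((n + 1 : ℕ) : R) • M = 0 ↔ M = 0 := by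
  constructor
  · intro h
    ext i j
    have := congrFun (congrFun h i) j
    simp only [Matrix.smul_apply, smul_eq_mul, Matrix.zero_apply] at this
    rcases mul_eq_zero.mp this with h0 | h0
    · exact absurd h0 (Nat.cast_ne_zero.mpr (Nat.succ_ne_zero n))
    · simpa using h0
  · intro h; rw [h, smul_zero]

variable (R)

/-- The twin family of vertices `(n+1) • E`. -/
def zdVert (n : ℕ) : zdVertexSet R :=
  ⟨((n + 1 : ℕ) : R) • zdE R,
    fun h => zdE_ne_zero R ((zd_smul_eq_zero n (zdE R)).mp h),
    zdE R, zdE_ne_zero R,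
    Or.inl (by rw [smul_mul_assoc, zdE_mul_zdE, smul_zero])⟩

lemma zdVert_injective : Function.Injective (zdVert R) := by
  intro m n h
  have h' := congrArg (fun v : zdVertexSet R => (v : Matrix (Fin 2) (Fin 2) R) 0 1) h
  simp only [zdVert, Matrix.smul_apply, zdE, Matrix.single_apply_same,
    smul_eq_mul, mul_one] at h'
  exact_mod_cast Nat.succ_injective (Nat.cast_injective h')

/-- The twin family as an embedding. -/
def zdVertEmb : ℕ ↪ zdVertexSet R := ⟨zdVert R, zdVert_injective R⟩

variable {R}

lemma zd_prod_vert_left (n : ℕ) (w : zdVertexSet R) :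
    (zdVert R n : Matrix (Fin 2) (Fin 2) R) * w = 0 ↔ zdE R * w = 0 := by
  show ((n + 1 : ℕ) : R) • zdE R * (w : Matrix (Fin 2) (Fin 2) R) = 0 ↔ _
  rw [smul_mul_assoc, zd_smul_eq_zero]

lemma zd_prod_vert_right (n : ℕ) (w : zdVertexSet R) :
    (w : Matrix (Fin 2) (Fin 2) R) * zdVert R n = 0 ↔
      (w : Matrix (Fin 2) (Fin 2) R) * zdE R = 0 := by
  show (w : Matrix (Fin 2) (Fin 2) R) * (((n + 1 : ℕ) : R) • zdE R) = 0 ↔ _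
  rw [mul_smul_comm, zd_smul_eq_zero]

lemma zd_prodE_vert (n : ℕ) :
    zdE R * (zdVert R n : Matrix (Fin 2) (Fin 2) R) = 0 ∧
      (zdVert R n : Matrix (Fin 2) (Fin 2) R) * zdE R = 0 := by
  constructor
  · show zdE R * (((n + 1 : ℕ) : R) • zdE R) = 0
    rw [mul_smul_comm, zdE_mul_zdE, smul_zero]
  · show (((n + 1 : ℕ) : R) • zdE R) * zdE R = 0
    rw [smul_mul_assoc, zdE_mul_zdE, smul_zero]

variable (R)

/-- Permutations of the twin family, as permutations of the vertex set. -/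
noncomputable def zdPermHom (k : ℕ) :
    Equiv.Perm (Fin k) →* Equiv.Perm (zdVertexSet R) :=
  Equiv.Perm.viaEmbeddingHom ((Fin.valEmbedding).trans (zdVertEmb R))

variable {R}

lemma zdPermHom_adj (k : ℕ) (σ : Equiv.Perm (Fin k)) (u v : zdVertexSet R) :
    (zdGraph R).Adj (zdPermHom R k σ u) (zdPermHom R k σ v) ↔ (zdGraph R).Adj u v := by
  set f : Fin k ↪ zdVertexSet R := (Fin.valEmbedding).trans (zdVertEmb R) with hf
  have hπ : zdPermHom R k σ = σ.viaEmbedding f := rfl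
  have happ : ∀ a : Fin k, σ.viaEmbedding f (f a) = f (σ a) :=
    fun a => σ.viaEmbedding_apply f a
  have hfa : ∀ a : Fin k, f a = zdVert R a := fun a => rfl
  have hne : ∀ w w' : zdVertexSet R,
      (σ.viaEmbedding f w ≠ σ.viaEmbedding f w') ↔ w ≠ w' :=
    fun w w' => not_congr (Equiv.apply_eq_iff_eq _)
  -- the zero-product condition is preserved
  have hP : ∀ w w' : zdVertexSet R,
      ((σ.viaEmbedding f w : Matrix (Fin 2) (Fin 2) R) * σ.viaEmbedding f w' = 0 ∨
        (σ.viaEmbedding f w' : Matrix (Fin 2) (Fin 2) R) * σ.viaEmbedding f w = 0) ↔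
      ((w : Matrix (Fin 2) (Fin 2) R) * w' = 0 ∨
        (w' : Matrix (Fin 2) (Fin 2) R) * w = 0) := by
    have hE : ∀ w' : zdVertexSet R,
        ((zdE R * (σ.viaEmbedding f w' : Matrix (Fin 2) (Fin 2) R) = 0 ∨
          (σ.viaEmbedding f w' : Matrix (Fin 2) (Fin 2) R) * zdE R = 0)) ↔
        (zdE R * (w' : Matrix (Fin 2) (Fin 2) R) = 0 ∨
          (w' : Matrix (Fin 2) (Fin 2) R) * zdE R = 0) := by
      intro w'
      by_cases hw : w' ∈ Set.range f
      · obtain ⟨b, rfl⟩ := hw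
        rw [happ, hfa, hfa]
        simp [(zd_prodE_vert (σ b).val).1, (zd_prodE_vert b.val).1]
      · rw [σ.viaEmbedding_apply_of_notMem f w' hw]
    intro w w'
    by_cases hw : w ∈ Set.range f
    · obtain ⟨a, rfl⟩ := hw
      rw [happ, hfa]
      exact (or_congr (zd_prod_vert_left _ _) (zd_prod_vert_right _ _)).trans
        ((hE w').trans
          (or_congr (zd_prod_vert_left _ _) (zd_prod_vert_right _ _)).symm)
    · rw [σ.viaEmbedding_apply_of_notMem f w hw]
      by_cases hw' : w' ∈ Set.range f
      · obtain ⟨b, rfl⟩ := hw'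
        rw [happ, hfa]
        exact (or_congr (zd_prod_vert_right _ _) (zd_prod_vert_left _ _)).trans
          (or_congr (zd_prod_vert_right _ _) (zd_prod_vert_left _ _)).symm
      · rw [σ.viaEmbedding_apply_of_notMem f w' hw']
  rw [hπ]
  exact and_congr (hne u v) (hP u v)

variable (R)

/-- Permutations of the twin family as automorphisms of the zero-divisor graph. -/
noncomputable def zdIsoHom (k : ℕ) :
    Equiv.Perm (Fin k) →* (zdGraph R ≃g zdGraph R) where
  toFun σ := ⟨zdPermHom R k σ, fun {u v} => zdPermHom_adj k σ u v⟩
  map_one' := by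
    apply RelIso.ext
    intro x
    show zdPermHom R k 1 x = x
    rw [map_one]
    rfl
  map_mul' σ τ := by
    apply RelIso.ext
    intro x
    show zdPermHom R k (σ * τ) x = zdPermHom R k σ (zdPermHom R k τ x)
    rw [map_mul]
    rfl

lemma zdIsoHom_injective (k : ℕ) : Function.Injective (zdIsoHom R k) := by
  intro σ τ h
  have h' : zdPermHom R k σ = zdPermHom R k τ :=
    congrArg (fun e => e.toEquiv) h
  exact Equiv.Perm.viaEmbeddingHom_injective _ h'

end aux

/-- Over an integral domain `R` of characteristic zero, the automorphism
group `G` of the undirected zero-divisor graph `Γ(M₂(R))` is not a Jordan group: there is no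
positive integer `d` such that every finite subgroup `H` of `G` contains an abelian normal
subgroup of index at most `d` in `H`. -/
theorem stmt19 (R : Type*) [CommRing R] [IsDomain R] [CharZero R] :
    ¬∃ d : ℕ, 0 < d ∧ ∀ H : Subgroup (zdGraph R ≃g zdGraph R), Finite H →
      ∃ A : Subgroup H, A.Normal ∧ (∀ x y : A, x * y = y * x) ∧ A.index ≤ d := by
  rintro ⟨d, hd, hJ⟩
  -- pick a prime p > d, written as m + 2
  obtain ⟨p, hdp, hp⟩ := Nat.exists_infinite_primes (d + 1)
  obtain ⟨m, rfl⟩ : ∃ m, p = m + 2 := ⟨p - 2, by have := hp.two_le; omega⟩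
  set Φ := zdIsoHom R (m + 3) with hΦ
  -- two non-commuting permutations of order dividing p = m + 2
  have hrot : (finRotate (m + 2)) ^ (m + 2) = 1 := by
    have horder : orderOf (finRotate (m + 2)) = m + 2 := by
      rw [← Equiv.Perm.lcm_cycleType, cycleType_finRotate]
      simp
    have h1 := pow_orderOf_eq_one (finRotate (m + 2))
    rw [horder] at h1
    exact h1
  set f₁ : Fin (m + 2) ↪ Fin (m + 3) := Fin.castSuccEmb with hf₁
  set f₂ : Fin (m + 2) ↪ Fin (m + 3) := Fin.succEmb (m + 2) with hf₂
  set σ : Equiv.Perm (Fin (m + 3)) :=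
    Equiv.Perm.viaEmbeddingHom f₁ (finRotate (m + 2)) with hσ
  set τ : Equiv.Perm (Fin (m + 3)) :=
    Equiv.Perm.viaEmbeddingHom f₂ (finRotate (m + 2)) with hτ
  have hσp : σ ^ (m + 2) = 1 := by
    have h1 := (map_pow (Equiv.Perm.viaEmbeddingHom f₁) (finRotate (m + 2)) (m + 2)).symm
    rw [hrot, map_one] at h1
    rw [hσ]; exact h1
  have hτp : τ ^ (m + 2) = 1 := by
    have h1 := (map_pow (Equiv.Perm.viaEmbeddingHom f₂) (finRotate (m + 2)) (m + 2)).symm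
    rw [hrot, map_one] at h1
    rw [hτ]; exact h1
  have hστ : σ * τ ≠ τ * σ := by
    intro h
    have h0 : (σ * τ) 0 = (τ * σ) 0 := by rw [h]
    simp only [Equiv.Perm.mul_apply] at h0
    have hτ0 : τ 0 = 0 := by
      apply Equiv.Perm.viaEmbedding_apply_of_notMem
      rintro ⟨a, ha⟩
      have := congrArg Fin.val ha
      simp [hf₂] at this
    have e0 : (0 : Fin (m + 3)) = f₁ (0 : Fin (m + 2)) := by
      apply Fin.ext; simp [hf₁]
    have hσ0v : (σ 0).val = 1 := by
      rw [e0]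
      rw [show σ (f₁ 0) = f₁ (finRotate (m + 2) (0 : Fin (m + 2))) from
        (finRotate (m + 2)).viaEmbedding_apply f₁ 0]
      simp [hf₁]
    have hσ0 : σ 0 = f₂ (0 : Fin (m + 2)) := by
      apply Fin.ext
      rw [hσ0v]; simp [hf₂]
    have hτσ0 : (τ (σ 0)).val = 2 := by
      rw [hσ0, show τ (f₂ 0) = f₂ (finRotate (m + 2) (0 : Fin (m + 2))) from
        (finRotate (m + 2)).viaEmbedding_apply f₂ 0]
      simp [hf₂]
    rw [hτ0] at h0
    have hv := congrArg Fin.val h0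
    rw [hσ0v, hτσ0] at hv
    omega
  -- the corresponding graph automorphisms
  set x := Φ σ with hx
  set y := Φ τ with hy
  have hxp : x ^ (m + 2) = 1 := by
    have h1 := (map_pow Φ σ (m + 2)).symm
    rw [hσp, map_one] at h1
    rw [hx]; exact h1
  have hyp : y ^ (m + 2) = 1 := by
    have h1 := (map_pow Φ τ (m + 2)).symm
    rw [hτp, map_one] at h1
    rw [hy]; exact h1
  have hxy : x * y ≠ y * x := by
    rw [hx, hy, ← map_mul, ← map_mul]
    intro h
    exact hστ (zdIsoHom_injective R (m + 3) h)
  -- the finite subgroup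
  have hHfin : Finite Φ.range :=
    Finite.of_surjective Φ.rangeRestrict Φ.rangeRestrict_surjective
  obtain ⟨A, hAnorm, hAcomm, hAind⟩ := hJ Φ.range hHfin
  haveI := hAnorm
  haveI := hHfin
  have hind0 : A.index ≠ 0 := Subgroup.index_ne_zero_of_finite
  have hdvd : A.index ∣ Nat.factorial d := Nat.dvd_factorial (Nat.pos_of_ne_zero hind0) hAind
  set x' : Φ.range := ⟨x, ⟨σ, rfl⟩⟩ with hx'
  set y' : Φ.range := ⟨y, ⟨τ, rfl⟩⟩ with hy'
  have hax : x' ^ (Nat.factorial d) ∈ A := by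
    obtain ⟨c, hc⟩ := hdvd
    rw [hc, pow_mul]
    exact A.pow_mem (A.pow_index_mem x') c
  have hay : y' ^ (Nat.factorial d) ∈ A := by
    obtain ⟨c, hc⟩ := hdvd
    rw [hc, pow_mul]
    exact A.pow_mem (A.pow_index_mem y') c
  have hcomm' : x' ^ (Nat.factorial d) * y' ^ (Nat.factorial d) = y' ^ (Nat.factorial d) * x' ^ (Nat.factorial d) := by
    have := hAcomm ⟨_, hax⟩ ⟨_, hay⟩
    exact Subtype.ext_iff.mp this
  have hcommG : x ^ (Nat.factorial d) * y ^ (Nat.factorial d) = y ^ (Nat.factorial d) * x ^ (Nat.factorial d) := by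
    have := Subtype.ext_iff.mp hcomm'
    simpa using this
  -- recover commutativity of x and y
  have hcop : Nat.Coprime (Nat.factorial d) (m + 2) := by
    have hnd : ¬ ((m + 2) ∣ Nat.factorial d) := by
      rw [Nat.Prime.dvd_factorial hp]
      omega
    exact Nat.Coprime.symm ((Nat.Prime.coprime_iff_not_dvd hp).mpr hnd)
  obtain ⟨e, -, he⟩ := Nat.exists_mul_mod_eq_one_of_coprime hcop (by omega)
  have hde : Nat.factorial d * e = (m + 2) * (Nat.factorial d * e / (m + 2)) + 1 := by
    have := Nat.div_add_mod (Nat.factorial d * e) (m + 2)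
    omega
  have hxde : x ^ (Nat.factorial d * e) = x := by
    rw [hde, pow_add, pow_mul, hxp, one_pow, one_mul, pow_one]
  have hyde : y ^ (Nat.factorial d * e) = y := by
    rw [hde, pow_add, pow_mul, hyp, one_pow, one_mul, pow_one]
  have : Commute x y := by
    have h1 : Commute (x ^ (Nat.factorial d)) (y ^ (Nat.factorial d)) := hcommG
    have h2 := h1.pow_pow e e
    rw [← pow_mul, ← pow_mul, hxde, hyde] at h2
    exact h2
  exact hxy this
end
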